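/- arXiv:1103.4457 — 5 statements merged into one kernel-verified Lean document; each statement's English description precedes it below -/
import Mathlib

section
/- For every integer n ≥ 0 and every real number x, the series ∑_{k=0}^∞ x^k k^n / k! converges absolutely and equals e^x B_n(x), where B_n is the n-th Bell polynomial. Equivalently, B_n(x) = e^{−x} ∑_{k=0}^∞ x^k k^n / k!. -/
/-!
Every power is a combination of falling factorials, `k ^ n = ∑ₘ S(n, m) k(k-1)⋯(k-m+1)`, which
splits the series into `n + 1` pieces. In the `m`-th piece `k(k-1)⋯(k-m+1) / k! = 1 / (k-m)!`, so it
is `x ^ m` times the exponential series, and the pieces add up to `e ^ x ∑ₘ S(n, m) x ^ m`.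
-/

/-- Stirling numbers of the second kind, via the standard recurrence
`S(n+1, k+1) = (k+1) S(n, k+1) + S(n, k)`; `S(n,k)` counts the partitions of an
`n`-element set into `k` nonempty blocks. -/
def stirlingSecond : ℕ → ℕ → ℕ
  | 0, 0 => 1
  | 0, _ + 1 => 0
  | _ + 1, 0 => 0
  | n + 1, k + 1 => (k + 1) * stirlingSecond n (k + 1) + stirlingSecond n k

/-- The `n`-th Bell polynomial `B_n(x) = ∑_{k=0}^n S(n,k) x^k`. -/
noncomputable def bellPoly (n : ℕ) (x : ℝ) : ℝ :=
  ∑ k ∈ Finset.range (n + 1), (stirlingSecond n k : ℝ) * x ^ k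

open Finset Polynomial

theorem stirlingSecond_eq_nat_stirlingSecond : stirlingSecond = Nat.stirlingSecond := by
  funext n k
  induction n generalizing k with
  | zero => cases k <;> rfl
  | succ n ih => cases k <;> simp [stirlingSecond, Nat.stirlingSecond_succ_succ, ih]

theorem Polynomial.X_pow_eq_sum_stirlingSecond_mul_descPochhammer (R : Type*) [Ring R] (n : ℕ) :
    (X : R[X]) ^ n = ∑ m ∈ range (n + 1), (Nat.stirlingSecond n m : R[X]) * descPochhammer R m := by
  induction n with
  | zero => simp
  | succ n ih =>
    have hX (m : ℕ) :
        descPochhammer R m * X = descPochhammer R (m + 1) + (m : R[X]) * descPochhammer R m := by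
      rw [descPochhammer_succ_right, mul_sub, ← Nat.cast_comm, sub_add_cancel]
    set f : ℕ → R[X] := fun m => (m * Nat.stirlingSecond n m : ℕ) * descPochhammer R m
    have hshift : ∑ m ∈ range (n + 1), f (m + 1) = ∑ m ∈ range (n + 1), f m := by
      -- both boundary terms vanish: `f 0` because of the factor `0`, `f (n + 1)` as `S(n, n+1) = 0`
      have := sum_range_succ' f (n + 1)
      rw [sum_range_succ] at this
      simpa [f, Nat.stirlingSecond_eq_zero_of_lt n.lt_succ_self] using this.symm
    calc (X : R[X]) ^ (n + 1)
        = ∑ m ∈ range (n + 1),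
            ((Nat.stirlingSecond n m : R[X]) * descPochhammer R (m + 1) + f m) := by
          rw [pow_succ, ih, sum_mul]
          refine sum_congr rfl fun m _ => ?_
          rw [mul_assoc, hX, mul_add, ← mul_assoc _ (m : R[X]), ← Nat.cast_comm]
          simp only [f, Nat.cast_mul]
      _ = ∑ m ∈ range (n + 1),
            ((Nat.stirlingSecond n m : R[X]) * descPochhammer R (m + 1) + f (m + 1)) := by
          rw [sum_add_distrib, sum_add_distrib, hshift]
      _ = _ := by
          rw [sum_range_succ' _ (n + 1)]
          simp [f, Nat.stirlingSecond_succ_succ, add_mul, add_comm]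

theorem hasSum_pow_mul_descFactorial_div_factorial {𝕂 : Type*} [RCLike 𝕂] (x : 𝕂) (m : ℕ) :
    HasSum (fun k : ℕ => x ^ k * k.descFactorial m / k.factorial) (x ^ m * NormedSpace.exp x) := by
  rw [← hasSum_nat_add_iff' m]
  have hlow : ∑ k ∈ range m, x ^ k * k.descFactorial m / k.factorial = 0 :=
    sum_eq_zero fun k hk => by simp [Nat.descFactorial_eq_zero_iff_lt.2 (mem_range.1 hk)]
  rw [hlow, sub_zero]
  refine ((NormedSpace.expSeries_div_hasSum_exp x).mul_left (x ^ m)).congr_fun fun k => ?_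
  have hfact : (k.factorial : 𝕂) * (k + m).descFactorial m = (k + m).factorial := by
    exact_mod_cast Nat.add_sub_cancel k m ▸ Nat.factorial_mul_descFactorial (Nat.le_add_left m k)
  have hdesc_ne : ((k + m).descFactorial m : 𝕂) ≠ 0 := by
    exact_mod_cast (Nat.descFactorial_pos.2 (Nat.le_add_left m k)).ne'
  rw [← hfact, pow_add]
  field_simp

theorem hasSum_pow_mul_cast_pow_div_factorial {𝕂 : Type*} [RCLike 𝕂] (x : 𝕂) (n : ℕ) :
    HasSum (fun k : ℕ => x ^ k * (k : 𝕂) ^ n / k.factorial)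
      (NormedSpace.exp x * ∑ m ∈ range (n + 1), (Nat.stirlingSecond n m : 𝕂) * x ^ m) := by
  have hpow (k : ℕ) :
      (k : 𝕂) ^ n = ∑ m ∈ range (n + 1), (Nat.stirlingSecond n m : 𝕂) * k.descFactorial m := by
    simpa [eval_finsetSum, descPochhammer_eval_eq_descFactorial] using
      congrArg (eval (k : 𝕂)) (X_pow_eq_sum_stirlingSecond_mul_descPochhammer 𝕂 n)
  have hterm (k : ℕ) :
      x ^ k * (k : 𝕂) ^ n / k.factorial =
        ∑ m ∈ range (n + 1),
          (Nat.stirlingSecond n m : 𝕂) * (x ^ k * k.descFactorial m / k.factorial) := by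
    rw [hpow, mul_sum, sum_div]
    exact sum_congr rfl fun m _ => by ring
  have hvalue : NormedSpace.exp x * ∑ m ∈ range (n + 1), (Nat.stirlingSecond n m : 𝕂) * x ^ m =
      ∑ m ∈ range (n + 1), (Nat.stirlingSecond n m : 𝕂) * (x ^ m * NormedSpace.exp x) := by
    rw [mul_sum]
    exact sum_congr rfl fun m _ => by ring
  rw [hvalue]
  exact (hasSum_sum fun m _ =>
    (hasSum_pow_mul_descFactorial_div_factorial x m).mul_left _).congr_fun hterm

/-- For every `n ≥ 0` and real `x`, the series `∑_{k≥0} x^k k^n / k!`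
converges absolutely and equals `e^x B_n(x)`. -/
theorem tsum_pow_mul_pow_div_factorial_eq_exp_mul_bellPoly (n : ℕ) (x : ℝ) :
    Summable (fun k : ℕ => |x ^ k * (k : ℝ) ^ n / (Nat.factorial k : ℝ)|) ∧
    ∑' k : ℕ, x ^ k * (k : ℝ) ^ n / (Nat.factorial k : ℝ) = Real.exp x * bellPoly n x := by
  have h := hasSum_pow_mul_cast_pow_div_factorial x n
  rw [← Real.exp_eq_exp_ℝ] at h
  have hbell : bellPoly n x = ∑ m ∈ range (n + 1), (Nat.stirlingSecond n m : ℝ) * x ^ m := by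
    simp only [bellPoly, stirlingSecond_eq_nat_stirlingSecond]
  exact ⟨h.summable.abs, by rw [h.tsum_eq, hbell]⟩
end

section
/- Let k_1, k_2, k_3 be positive real constants and define f(x, y) = exp( −((k_1 − x)/(2 k_2)) · log( 1 + (k_1 − x) k_2 / (k_3 y) ) ) for real x with k_1 − x > 0 and real y > 0. Then f is strictly increasing in x (for fixed y > 0) and strictly increasing in y (for fixed x with k_1 − x > 0). -/
/-!
With `a = k₁ - x > 0`, the exponent is `-(a log(1 + a c)) / (2 k₂)` with `c = k₂ / (k₃ y) > 0`.
Since `a ↦ a log(1 + a c)` is a product of two nonnegative increasing factors, the exponent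
decreases in `a`, i.e. increases in `x`; and `y` enters only through `log(1 + p / y)`, which
decreases in `y` and carries the negative coefficient `-(a / (2 k₂))`.
-/

open Real Set

lemma mul_log_one_add_mul_strictMonoOn {c : ℝ} (hc : 0 < c) :
    StrictMonoOn (fun a => a * log (1 + a * c)) (Ici 0) := by
  rintro a (ha : 0 ≤ a) b - hab
  have hb : 0 < b := ha.trans_lt hab
  calc a * log (1 + a * c) ≤ a * log (1 + b * c) :=
        mul_le_mul_of_nonneg_left (log_le_log (by positivity) (by gcongr)) ha
    _ < b * log (1 + b * c) := mul_lt_mul_of_pos_right hab (log_pos (by nlinarith))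

lemma neg_div_mul_log_one_add_mul_strictAntiOn {c d : ℝ} (hc : 0 < c) (hd : 0 < d) :
    StrictAntiOn (fun a => -(a / d) * log (1 + a * c)) (Ici 0) := by
  intro a ha b hb hab
  simp only [neg_mul, div_mul_eq_mul_div, neg_lt_neg_iff]
  exact div_lt_div_of_pos_right (mul_log_one_add_mul_strictMonoOn hc ha hb hab) hd

lemma log_one_add_div_strictAntiOn {p : ℝ} (hp : 0 < p) :
    StrictAntiOn (fun y => log (1 + p / y)) (Ioi 0) := by
  rintro y (hy : 0 < y) z (hz : 0 < z) hyz
  exact log_lt_log (by positivity) (by gcongr)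

theorem concentration_bound_strictly_increasing_general
    (k₁ k₂ k₃ : ℝ) (h₂ : 0 < k₂) (h₃ : 0 < k₃) :
    (∀ y : ℝ, 0 < y → ∀ x₁ x₂ : ℝ, 0 < k₁ - x₁ → 0 < k₁ - x₂ → x₁ < x₂ →
      Real.exp (-((k₁ - x₁) / (2 * k₂)) * Real.log (1 + (k₁ - x₁) * k₂ / (k₃ * y)))
        < Real.exp (-((k₁ - x₂) / (2 * k₂)) * Real.log (1 + (k₁ - x₂) * k₂ / (k₃ * y)))) ∧
    (∀ x : ℝ, 0 < k₁ - x → ∀ y₁ y₂ : ℝ, 0 < y₁ → y₁ < y₂ →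
      Real.exp (-((k₁ - x) / (2 * k₂)) * Real.log (1 + (k₁ - x) * k₂ / (k₃ * y₁)))
        < Real.exp (-((k₁ - x) / (2 * k₂)) * Real.log (1 + (k₁ - x) * k₂ / (k₃ * y₂)))) := by
  constructor
  · intro y hy x₁ x₂ ha₁ ha₂ hx
    simp only [exp_lt_exp, mul_div_assoc]
    exact neg_div_mul_log_one_add_mul_strictAntiOn (by positivity) (by positivity)
      (mem_Ici.2 ha₂.le) (mem_Ici.2 ha₁.le) (by linarith)
  · intro x ha y₁ y₂ hy₁ hy
    have hsplit (y : ℝ) : (k₁ - x) * k₂ / (k₃ * y) = (k₁ - x) * k₂ / k₃ / y := by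
      rw [div_div]
    rw [exp_lt_exp, hsplit, hsplit]
    have hcoef : -((k₁ - x) / (2 * k₂)) < 0 := neg_neg_of_pos (by positivity)
    exact mul_lt_mul_of_neg_left (log_one_add_div_strictAntiOn (by positivity) hy₁
      (mem_Ioi.2 (hy₁.trans hy)) hy) hcoef

/-- For positive constants `k₁, k₂, k₃`, the function
`f(x,y) = exp(−((k₁−x)/(2k₂)) log(1 + (k₁−x)k₂/(k₃ y)))`, defined for `k₁ − x > 0` and
`y > 0`, is strictly increasing in `x` and strictly increasing in `y`. -/
theorem concentration_bound_strictly_increasing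
    (k₁ k₂ k₃ : ℝ) (h₁ : 0 < k₁) (h₂ : 0 < k₂) (h₃ : 0 < k₃) :
    (∀ y : ℝ, 0 < y → ∀ x₁ x₂ : ℝ, 0 < k₁ - x₁ → 0 < k₁ - x₂ → x₁ < x₂ →
      Real.exp (-((k₁ - x₁) / (2 * k₂)) * Real.log (1 + (k₁ - x₁) * k₂ / (k₃ * y)))
        < Real.exp (-((k₁ - x₂) / (2 * k₂)) * Real.log (1 + (k₁ - x₂) * k₂ / (k₃ * y)))) ∧
    (∀ x : ℝ, 0 < k₁ - x → ∀ y₁ y₂ : ℝ, 0 < y₁ → y₁ < y₂ →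
      Real.exp (-((k₁ - x) / (2 * k₂)) * Real.log (1 + (k₁ - x) * k₂ / (k₃ * y₁)))
        < Real.exp (-((k₁ - x) / (2 * k₂)) * Real.log (1 + (k₁ - x) * k₂ / (k₃ * y₂)))) :=
  concentration_bound_strictly_increasing_general k₁ k₂ k₃ h₂ h₃
end

section
/- For every integer n ≥ 1, the following identity holds: ∑_{j=⌈(n+1)/2⌉}^{n} [ 2 ∑_{i=n−j+1}^{j} (−1)^{i+j} n / ( (n−j)! (n−i)! (i+j−n)! ) − n / ( ((n−j)!)^2 (2j−n)! ) ] = (−1)^n (1 − 2^n) / (n−1)!. -/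
/-!
Extend the summand by `0` outside the region `i + j > n`; it is symmetric in `i` and `j`, so
the bracket (twice the sum over `i ≤ j`, minus the diagonal) turns the left-hand side into the
sum over the whole square `0 ≤ i, j ≤ n`. For fixed `j ≥ 1` the row sum is, after `a = n - i`,
the truncated alternating binomial sum `∑_{a<j} (-1)^a C(j,a) = -(-1)^j`, so the row contributes
`(-1)^(n+1) n C(n,j) / n!`; summing `C(n,j)` over `1 ≤ j ≤ n` gives `2^n - 1`.
-/

open Finset Nat

theorem sum_range_two_mul_triangle_sub_diag {R : Type*} [Ring R] {f : ℕ → ℕ → R}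
    (hf : ∀ i j, f i j = f j i) (N : ℕ) :
    ∑ j ∈ range N, (2 * ∑ i ∈ range (j + 1), f i j - f j j) =
      ∑ j ∈ range N, ∑ i ∈ range N, f i j := by
  induction N with
  | zero => simp
  | succ N ih =>
    rw [sum_range_succ, ih, sum_range_succ]
    simp only [sum_range_succ, sum_add_distrib]
    rw [sum_congr rfl fun j _ => hf N j]
    noncomm_ring

theorem sum_range_neg_one_pow_mul_choose {R : Type*} [Ring R] {m : ℕ} (hm : 0 < m) :
    ∑ a ∈ range m, (-1 : R) ^ a * m.choose a = -(-1) ^ m := by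
  have h := congrArg (Int.cast : ℤ → R) (Int.alternating_sum_range_choose_of_ne hm.ne')
  push_cast at h
  rw [sum_range_succ, choose_self, cast_one, mul_one] at h
  exact eq_neg_of_add_eq_zero_left h

noncomputable def alphaTerm (n i j : ℕ) : ℝ :=
  if n < i + j then
    (-1) ^ (i + j) * n / ((n - j)! * (n - i)! * (i + j - n)! : ℝ)
  else 0

theorem alphaTerm_symm (n i j : ℕ) : alphaTerm n i j = alphaTerm n j i := by
  rw [alphaTerm, alphaTerm, add_comm j i, mul_comm ((n - i)! : ℝ)]

theorem alphaTerm_eq_choose {n i j : ℕ} (hi : i ≤ n) (hj : j ≤ n) (hij : n < i + j) :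
    alphaTerm n i j = (-1) ^ (i + j) * n / n ! * n.choose j * j.choose (n - i) := by
  have hni : n - i ≤ j := by omega
  rw [alphaTerm, if_pos hij, cast_choose ℝ hj, cast_choose ℝ hni,
    show j - (n - i) = i + j - n by omega]
  field_simp

theorem alphaTerm_diag {n j : ℕ} (hj : n < j + j) :
    alphaTerm n j j = n / ((n - j)! ^ 2 * (2 * j - n)! : ℝ) := by
  rw [alphaTerm, if_pos hj, ← two_mul, pow_mul, neg_one_sq, one_pow, one_mul, sq]

theorem sum_alphaTerm_row {n j : ℕ} (hj : 0 < j) (hjn : j ≤ n) :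
    ∑ i ∈ range (n + 1), alphaTerm n i j = (-1) ^ (n + 1) * n / n ! * n.choose j := by
  rw [← sum_range_reflect]
  simp only [add_tsub_cancel_right]
  have hsub : range j ⊆ range (n + 1) := range_subset_range.mpr (by omega)
  rw [← sum_subset hsub fun a _ ha => ?_]
  · calc
      ∑ a ∈ range j, alphaTerm n (n - a) j =
          ∑ a ∈ range j,
            (-1 : ℝ) ^ (n + j) * n / n ! * n.choose j * ((-1) ^ a * j.choose a) := by
        refine sum_congr rfl fun a ha => ?_
        have ha : a < j := mem_range.mp ha
        have hsign : (-1 : ℝ) ^ (n - a + j) = (-1) ^ (n + j) * (-1) ^ a := by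
          rw [← pow_add, show n + j + a = n - a + j + 2 * a by omega, pow_add _ (n - a + j),
            pow_mul]
          norm_num
        rw [alphaTerm_eq_choose (by omega) hjn (by omega), Nat.sub_sub_self (by omega), hsign]
        ring
      _ = (-1) ^ (n + 1) * n / n ! * n.choose j := by
        have hsq : (-1 : ℝ) ^ j * (-1) ^ j = 1 := by rw [← mul_pow]; norm_num
        rw [← mul_sum, sum_range_neg_one_pow_mul_choose hj, pow_succ, pow_add]
        linear_combination (-(-1) ^ n * n / n ! * n.choose j : ℝ) * hsq
  · rw [alphaTerm, if_neg (by simp at ha; omega)]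

theorem sum_alphaTerm_square {n : ℕ} (hn : 0 < n) :
    ∑ j ∈ range (n + 1), ∑ i ∈ range (n + 1), alphaTerm n i j =
      (-1) ^ n * (1 - 2 ^ n) / (n - 1)! := by
  have hrow₀ : ∑ i ∈ range (n + 1), alphaTerm n i 0 = 0 :=
    sum_eq_zero fun i hi => if_neg (by simp at hi; omega)
  have hchoose : ∑ j ∈ range n, (n.choose (j + 1) : ℝ) = 2 ^ n - 1 := by
    have h := congrArg (Nat.cast : ℕ → ℝ) (Nat.sum_range_choose n)
    push_cast at h
    rw [sum_range_succ', choose_zero_right, cast_one] at h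
    linarith
  rw [sum_range_succ', hrow₀, add_zero,
    sum_congr rfl fun j hj => sum_alphaTerm_row j.succ_pos (by simp at hj; omega),
    ← mul_sum, hchoose]
  obtain ⟨m, rfl⟩ := Nat.exists_eq_add_of_le' hn
  rw [factorial_succ, add_tsub_cancel_right]
  push_cast
  field_simp
  ring

theorem sum_Icc_alpha_eq_sum_range_alphaTerm (n : ℕ) :
    ∑ j ∈ Icc ((n + 2) / 2) n,
      (2 * ∑ i ∈ Icc (n - j + 1) j,
          (-1 : ℝ) ^ (i + j) * n / ((n - j)! * (n - i)! * (i + j - n)! : ℝ)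
        - n / ((n - j)! ^ 2 * (2 * j - n)! : ℝ)) =
      ∑ j ∈ range (n + 1),
        (2 * ∑ i ∈ range (j + 1), alphaTerm n i j - alphaTerm n j j) := by
  have hcols : Icc ((n + 2) / 2) n = (range (n + 1)).filter (fun j => n < j + j) := by
    ext j; simp; omega
  calc _ = ∑ j ∈ range (n + 1) with n < j + j,
        (2 * ∑ i ∈ range (j + 1), alphaTerm n i j - alphaTerm n j j) := by
        rw [hcols]
        refine sum_congr rfl fun j hj => ?_
        obtain ⟨hjn, hj⟩ := mem_filter.mp hj
        rw [mem_range] at hjn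
        have hrow : (range (j + 1)).filter (fun i => n < i + j) = Icc (n - j + 1) j := by
          ext i; simp; omega
        rw [← hrow, sum_filter, alphaTerm_diag hj]
        rfl
    _ = _ := sum_filter_of_ne fun j _ hne => by
        by_contra hj
        have hzero : ∀ i ≤ j, alphaTerm n i j = 0 := fun i hi => if_neg (by omega)
        rw [sum_eq_zero fun i hi => hzero i (by simpa [Nat.lt_succ_iff] using hi), hzero j le_rfl]
          at hne
        simp at hne

/-- For every `n ≥ 1`,
`∑_{j=⌈(n+1)/2⌉}^{n} [ 2 ∑_{i=n−j+1}^{j} (−1)^{i+j} n / ((n−j)! (n−i)! (i+j−n)!)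
  − n / (((n−j)!)² (2j−n)!) ] = (−1)^n (1 − 2^n)/(n−1)!`.
(Here `⌈(n+1)/2⌉ = (n+2)/2` as a natural-number division.) -/
theorem alpha_coefficient_identity (n : ℕ) (hn : 1 ≤ n) :
    ∑ j ∈ Finset.Icc ((n + 2) / 2) n,
      (2 * ∑ i ∈ Finset.Icc (n - j + 1) j,
          (-1 : ℝ) ^ (i + j) * (n : ℝ)
            / ((Nat.factorial (n - j) : ℝ) * (Nat.factorial (n - i) : ℝ)
                * (Nat.factorial (i + j - n) : ℝ))
        - (n : ℝ) / ((Nat.factorial (n - j) : ℝ) ^ 2 * (Nat.factorial (2 * j - n) : ℝ)))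
      = (-1 : ℝ) ^ n * (1 - 2 ^ n) / (Nat.factorial (n - 1) : ℝ) := by
  rw [sum_Icc_alpha_eq_sum_range_alphaTerm,
    sum_range_two_mul_triangle_sub_diag (alphaTerm_symm n), sum_alphaTerm_square hn]
end

section
/- For every integer n ≥ 1 define β_n = ∑_{j=⌈(n+1)/2⌉}^{n} [ 2 ∑_{i=n−j+1}^{j} (−1)^{i+j} · 2 (n−i)(n−j) / ( (n−j)! (n−i)! (i+j−n+1)! ) − 2 (n−j)^2 / ( ((n−j)!)^2 (2j−n+1)! ) ]. Then for every real number x, the series ∑_{n=1}^∞ β_n x^n converges absolutely and equals 2x e^{−x} − 2(x + x^2) e^{−2x}. -/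
/-- The coefficient `β_n` of Theorem "variance of χ in dimension one":
`β_n = ∑_{j=⌈(n+1)/2⌉}^{n} [ 2 ∑_{i=n−j+1}^{j} (−1)^{i+j} 2(n−i)(n−j) /
((n−j)!(n−i)!(i+j−n+1)!) − 2(n−j)²/(((n−j)!)²(2j−n+1)!) ]`. -/
noncomputable def betaCoeff (n : ℕ) : ℝ :=
  ∑ j ∈ Finset.Icc ((n + 2) / 2) n,
    (2 * ∑ i ∈ Finset.Icc (n - j + 1) j,
        (-1 : ℝ) ^ (i + j) * (2 * ((n - i : ℕ) : ℝ) * ((n - j : ℕ) : ℝ))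
          / ((Nat.factorial (n - j) : ℝ) * (Nat.factorial (n - i) : ℝ)
              * (Nat.factorial (i + j - n + 1) : ℝ))
      - 2 * ((n - j : ℕ) : ℝ) ^ 2
          / ((Nat.factorial (n - j) : ℝ) ^ 2 * (Nat.factorial (2 * j - n + 1) : ℝ)))

/-!
The summand of `β_n` is symmetric in `i, j`, and the bracket counts the pairs `i < j` twice and
the diagonal once, so `β_n` is the sum over the whole triangle `i + j ≥ n + 1` of `[1, n]²`.
In the variables `a = n - i`, `b = n - j` this reads
`β_n = ∑_{a + b + c = n + 1, c ≥ 2} 2 (-1)^(a+b) a b / (a! b! c!)`,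
a coefficient of the product of the series `-x e^{-x}`, `-x e^{-x}` and `e^x - 1 - x`. Hence
`β_{N+1} = (2 (-1)^N + (N - 2) (-2)^N) / N!`, and the series is a combination of exponential
series: `∑ β_n x^(n+1) = 2 x² e^{-2x} (e^x - 1 - x)`.
-/

open Finset Nat

section ExpCoefficients

variable {K : Type*} [Field K] [CharZero K]

theorem succ_mul_pow_succ_div_factorial (x : K) (n : ℕ) :
    (n + 1 : K) * x ^ (n + 1) / (n + 1)! = x * (x ^ n / n !) := by
  have : (n + 1 : K) ≠ 0 := Nat.cast_add_one_ne_zero n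
  rw [factorial_succ, cast_mul, pow_succ]
  push_cast
  field_simp

theorem sum_antidiagonal_pow_div_factorial_mul (x y : K) (n : ℕ) :
    ∑ q ∈ antidiagonal n, x ^ q.1 / q.1 ! * (y ^ q.2 / q.2 !) = (x + y) ^ n / n ! := by
  rw [(Commute.all x y).add_pow', sum_div]
  refine sum_congr rfl fun q hq ↦ ?_
  rw [← mem_antidiagonal.mp hq, nsmul_eq_mul, Nat.cast_add_choose]
  have := (q.1 + q.2).factorial_ne_zero
  field_simp

theorem sum_antidiagonal_mul_pow_div_factorial_mul (x y : K) (n : ℕ) :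
    ∑ q ∈ antidiagonal (n + 2), q.1 * x ^ q.1 / q.1 ! * (q.2 * y ^ q.2 / q.2 !)
      = x * y * ((x + y) ^ n / n !) := by
  rw [Nat.sum_antidiagonal_succ, Nat.sum_antidiagonal_succ',
    ← sum_antidiagonal_pow_div_factorial_mul, mul_sum]
  simp only [Nat.cast_zero, zero_mul, zero_div, mul_zero, zero_add, Nat.cast_succ,
    succ_mul_pow_succ_div_factorial]
  refine sum_congr rfl fun q _ ↦ ?_
  ring

theorem sum_antidiagonal_mul_sub_one_pow_div_factorial_mul (x y : K) (n : ℕ) :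
    ∑ q ∈ antidiagonal (n + 2), q.1 * (q.1 - 1) * x ^ q.1 / q.1 ! * (y ^ q.2 / q.2 !)
      = x ^ 2 * ((x + y) ^ n / n !) := by
  rw [Nat.sum_antidiagonal_succ, Nat.sum_antidiagonal_succ,
    ← sum_antidiagonal_pow_div_factorial_mul, mul_sum]
  simp only [Nat.cast_zero, zero_mul, zero_div, zero_add, Nat.cast_one, sub_self, mul_zero]
  refine sum_congr rfl fun q _ ↦ ?_
  have h₁ := succ_mul_pow_succ_div_factorial x (q.1 + 1)
  have h₂ := succ_mul_pow_succ_div_factorial x q.1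
  push_cast at h₁ h₂ ⊢
  linear_combination (q.1 + 1 : K) * (y ^ q.2 / q.2 !) * h₁ + x * (y ^ q.2 / q.2 !) * h₂

/-- The right-hand side is `2^(m-2) / (m-2)!` written so as to stay correct for `m < 2`. -/
theorem sum_antidiagonal_div_factorial_mul (m : ℕ) :
    ∑ q ∈ antidiagonal m, (q.1 / q.1 ! * (q.2 / q.2 !) : K)
      = m * (m - 1) * 2 ^ m / (4 * m !) := by
  match m with
  | 0 => simp
  | 1 => simp [Nat.sum_antidiagonal_succ]
  | k + 2 =>
    have h := sum_antidiagonal_mul_pow_div_factorial_mul (1 : K) 1 k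
    have h₁ := succ_mul_pow_succ_div_factorial (2 : K) (k + 1)
    have h₂ := succ_mul_pow_succ_div_factorial (2 : K) k
    simp only [one_pow, mul_one, one_mul, one_add_one_eq_two] at h
    rw [h]
    rw [show k + 1 + 1 = k + 2 from rfl] at h₁
    push_cast at h₁ h₂ ⊢
    linear_combination -(k + 1 : K) / 4 * h₁ - 1 / 2 * h₂

end ExpCoefficients

theorem Real.hasSum_pow_div_factorial (x : ℝ) : HasSum (fun n ↦ x ^ n / n !) (Real.exp x) := by
  rw [Real.exp_eq_exp_ℝ]
  exact NormedSpace.expSeries_div_hasSum_exp x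

theorem Real.hasSum_mul_pow_div_factorial (x : ℝ) :
    HasSum (fun n ↦ n * x ^ n / n !) (x * Real.exp x) := by
  rw [← hasSum_nat_add_iff' 1]
  simp only [range_one, sum_singleton, CharP.cast_eq_zero, zero_mul, zero_div, sub_zero]
  refine (Real.hasSum_pow_div_factorial x).mul_left x |>.congr_fun fun n ↦ ?_
  push_cast
  exact succ_mul_pow_succ_div_factorial x n

theorem sum_filter_le_add_sum_filter_lt_of_swap {α M : Type*} [LinearOrder α] [AddCommMonoid M]
    {s : Finset (α × α)} (hs : ∀ p ∈ s, p.swap ∈ s) {f : α × α → M}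
    (hf : ∀ p, f p.swap = f p) :
    ∑ p ∈ s with p.2 ≤ p.1, f p + ∑ p ∈ s with p.2 < p.1, f p = ∑ p ∈ s, f p := by
  rw [← sum_filter_add_sum_filter_not s (fun p ↦ p.2 ≤ p.1)]
  congr 1
  refine sum_nbij' Prod.swap Prod.swap ?_ ?_ (fun _ _ ↦ rfl) (fun _ _ ↦ rfl)
    fun p _ ↦ (hf p).symm
  all_goals
    intro p hp
    simp only [mem_filter, Prod.fst_swap, Prod.snd_swap, not_le] at hp ⊢
    exact ⟨hs p hp.1, hp.2⟩

theorem sum_range_sum_antidiagonal {M : Type*} [AddCommMonoid M] (n : ℕ) (f : ℕ × ℕ → M) :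
    ∑ m ∈ range n, ∑ q ∈ antidiagonal m, f q
      = ∑ q ∈ range n ×ˢ range n with q.1 + q.2 < n, f q := by
  rw [← sum_fiberwise_of_maps_to (g := fun q : ℕ × ℕ ↦ q.1 + q.2) (t := range n)]
  · refine sum_congr rfl fun m hm ↦ sum_congr ?_ fun _ _ ↦ rfl
    ext q
    simp only [HasAntidiagonal.mem_antidiagonal, mem_filter, mem_product, mem_range] at hm ⊢
    omega
  · intro q hq
    simp only [mem_filter, mem_range] at hq ⊢
    exact hq.2

noncomputable def betaTerm (n i j : ℕ) : ℝ :=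
  (-1 : ℝ) ^ (i + j) * (2 * ((n - i : ℕ) : ℝ) * ((n - j : ℕ) : ℝ))
    / ((n - j)! * (n - i)! * (i + j - n + 1)! : ℝ)

theorem betaTerm_comm (n i j : ℕ) : betaTerm n i j = betaTerm n j i := by
  simp only [betaTerm, add_comm i j]
  ring

theorem betaTerm_self (n j : ℕ) :
    betaTerm n j j = 2 * ((n - j : ℕ) : ℝ) ^ 2 / ((n - j)! ^ 2 * (2 * j - n + 1)! : ℝ) := by
  simp only [betaTerm, ← two_mul, pow_mul, neg_one_sq, one_pow]
  ring

theorem betaCoeff_eq_sum_region (n : ℕ) :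
    betaCoeff n = ∑ p ∈ Icc 1 n ×ˢ Icc 1 n with n + 1 ≤ p.1 + p.2, betaTerm n p.2 p.1 := by
  set R := {p ∈ Icc 1 n ×ˢ Icc 1 n | n + 1 ≤ p.1 + p.2}
  have hR : ∀ p ∈ R, p.swap ∈ R := by
    intro p hp
    simp only [R, mem_filter, mem_product, mem_Icc, Prod.fst_swap, Prod.snd_swap] at hp ⊢
    omega
  have hle (p : ℕ × ℕ) : p ∈ {p ∈ R | p.2 ≤ p.1} ↔
      p.1 ∈ Icc ((n + 2) / 2) n ∧ p.2 ∈ Icc (n - p.1 + 1) p.1 := by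
    simp only [R, mem_filter, mem_product, mem_Icc]
    omega
  have hlt (p : ℕ × ℕ) : p ∈ {p ∈ R | p.2 < p.1} ↔
      p.1 ∈ Icc ((n + 2) / 2) n ∧ p.2 ∈ Ico (n - p.1 + 1) p.1 := by
    simp only [R, mem_filter, mem_product, mem_Icc, mem_Ico]
    omega
  rw [← sum_filter_le_add_sum_filter_lt_of_swap hR fun p ↦ betaTerm_comm n p.1 p.2,
    sum_finset_product' _ _ (fun j ↦ Icc (n - j + 1) j) hle (f := fun j i ↦ betaTerm n i j),
    sum_finset_product' _ _ (fun j ↦ Ico (n - j + 1) j) hlt (f := fun j i ↦ betaTerm n i j),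
    ← sum_add_distrib]
  refine sum_congr rfl fun j hj ↦ ?_
  rw [← Ico_insert_right (by simp at hj; omega), sum_insert (by simp), sum_insert (by simp),
    ← betaTerm_self]
  simp only [betaTerm]
  ring

theorem betaCoeff_eq_sum_range (n : ℕ) :
    betaCoeff n = ∑ m ∈ range n, 2 * (-1) ^ m / (n + 1 - m)! *
      ∑ q ∈ antidiagonal m, (q.1 / q.1 ! * (q.2 / q.2 !) : ℝ) := by
  have hgroup : ∀ m ∈ range n, 2 * (-1) ^ m / (n + 1 - m)! *
      ∑ q ∈ antidiagonal m, (q.1 / q.1 ! * (q.2 / q.2 !) : ℝ) = ∑ q ∈ antidiagonal m,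
        2 * (-1) ^ (q.1 + q.2) / (n + 1 - (q.1 + q.2))! * (q.1 / q.1 ! * (q.2 / q.2 !) : ℝ) := by
    intro m _
    rw [mul_sum]
    refine sum_congr rfl fun q hq ↦ ?_
    rw [mem_antidiagonal.mp hq]
  rw [sum_congr rfl hgroup, sum_range_sum_antidiagonal, betaCoeff_eq_sum_region]
  refine sum_nbij' (fun p ↦ (n - p.2, n - p.1)) (fun q ↦ (n - q.2, n - q.1)) ?_ ?_ ?_ ?_ ?_
  all_goals simp only [mem_filter, mem_product, mem_Icc, mem_range, Prod.ext_iff]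
  · intro p hp; omega
  · intro q hq; omega
  · intro p hp; omega
  · intro q hq; omega
  · rintro ⟨j, i⟩ hp
    rw [betaTerm, neg_one_pow_congr (m := i + j) (n := n - i + (n - j))
      (by simp only [Nat.even_iff]; omega), show i + j - n + 1 = n + 1 - (n - i + (n - j)) by omega]
    ring

theorem betaCoeff_succ (N : ℕ) :
    betaCoeff (N + 1) = (2 * (-1) ^ N + (N - 2) * (-2) ^ N) / N ! := by
  let G : ℕ → ℕ → ℝ := fun a b ↦ 2 * (-1) ^ a / b ! * (a * (a - 1) * 2 ^ a / (4 * a !))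
  have hβ : betaCoeff (N + 1) = ∑ m ∈ range (N + 1), G m (N + 2 - m) := by
    simp only [betaCoeff_eq_sum_range, sum_antidiagonal_div_factorial_mul, G]
  -- completing the sum over `m ≤ N` by the terms `m = N + 1, N + 2` gives a Cauchy product
  have hfull : ∑ q ∈ antidiagonal (N + 2), G q.1 q.2 = 2 * (-1) ^ N / N ! :=
    calc ∑ q ∈ antidiagonal (N + 2), G q.1 q.2
        = 1 / 2 * ∑ q ∈ antidiagonal (N + 2),
            q.1 * (q.1 - 1) * (-2 : ℝ) ^ q.1 / q.1 ! * (1 ^ q.2 / q.2 !) := by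
          rw [mul_sum]
          refine sum_congr rfl fun q _ ↦ ?_
          simp only [G, neg_pow (2 : ℝ), one_pow]
          ring
      _ = 2 * (-1) ^ N / N ! := by
          rw [sum_antidiagonal_mul_sub_one_pow_div_factorial_mul]
          norm_num
          ring
  have hG₁ : G (N + 1) 1 = -(N * (-2) ^ N / N !) := by
    simp only [G, factorial_succ, factorial_zero, neg_pow (2 : ℝ)]
    push_cast
    field_simp
    ring
  have hG₂ : G (N + 2) 0 = 2 * (-2) ^ N / N ! := by
    simp only [G, factorial_succ, factorial_zero, neg_pow (2 : ℝ)]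
    push_cast
    field_simp
    ring
  rw [Nat.sum_antidiagonal_eq_sum_range_succ G, sum_range_succ, sum_range_succ, ← hβ,
    show N + 2 - (N + 1) = 1 by omega, Nat.sub_self, hG₁, hG₂] at hfull
  linear_combination hfull

theorem betaCoeff_hasSum (x : ℝ) :
    HasSum (fun n ↦ betaCoeff (n + 1) * x ^ (n + 1))
      (2 * x * Real.exp (-x) - 2 * (x + x ^ 2) * Real.exp (-(2 * x))) := by
  have h := ((((Real.hasSum_pow_div_factorial (-x)).mul_left 2).sub
    ((Real.hasSum_pow_div_factorial (-(2 * x))).mul_left 2)).add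
    (Real.hasSum_mul_pow_div_factorial (-(2 * x)))).mul_left x
  rw [show 2 * x * Real.exp (-x) - 2 * (x + x ^ 2) * Real.exp (-(2 * x))
      = x * (2 * Real.exp (-x) - 2 * Real.exp (-(2 * x)) + -(2 * x) * Real.exp (-(2 * x))) by ring]
  refine h.congr_fun fun n ↦ ?_
  rw [betaCoeff_succ, neg_pow x, neg_pow (2 * x), mul_pow, neg_pow (2 : ℝ)]
  ring

/-- For every real `x` the series `∑_{n≥1} β_n x^n` converges
absolutely and equals `2x e^{−x} − 2(x + x²) e^{−2x}`. -/
theorem betaCoeff_series_sum (x : ℝ) :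
    Summable (fun n : ℕ => |betaCoeff (n + 1) * x ^ (n + 1)|) ∧
    ∑' n : ℕ, betaCoeff (n + 1) * x ^ (n + 1)
      = 2 * x * Real.exp (-x) - 2 * (x + x ^ 2) * Real.exp (-(2 * x)) :=
  ⟨summable_abs_iff.mpr (betaCoeff_hasSum x).summable, (betaCoeff_hasSum x).tsum_eq⟩
end

section
/- For every integer n ≥ 1: ∑_{j=1}^{n} C(n,j) ( C(j−1, n−j) − C(j−1, n−j−1) ) = (−1)^{n+1}, where C(p,q) denotes the binomial coefficient, with the convention C(p,q) = 0 whenever q < 0 or q > p. -/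
/-!
The sum is the coefficient of `X ^ n` in `Q = ∑ⱼ C(n,j) Xʲ (1 - X) (1 + X)ʲ⁻¹`, and the binomial
theorem gives `(1 + X) Q = (1 - X) (R - 1)` with `R = (1 + X + X²)ⁿ = ∑ rₘ Xᵐ`. Hence `(-1)ⁿ Qₙ`,
the alternating sum of the first `n + 1` coefficients of `(1 + X) Q`, equals
`∑_{m ≤ n} (-1)ᵐ rₘ + ∑_{m < n} (-1)ᵐ rₘ - 2`. Since `R` is palindromic of degree `2n`, the two
partial sums add up to the full alternating sum `R(-1) = 1`, so `(-1)ⁿ Qₙ = -1`.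
-/

/-- Binomial coefficient `C(p, q)` for an integer lower index, with the convention
`C(p, q) = 0` whenever `q < 0` (and, via `Nat.choose`, whenever `q > p`). -/
def chooseZ (p : ℕ) (q : ℤ) : ℤ := if 0 ≤ q then (p.choose q.toNat : ℤ) else 0

open Polynomial Finset

section AlternatingCoeffSum

variable {R : Type*} [CommRing R]

noncomputable def alternatingCoeffSum (p : R[X]) (n : ℕ) : R :=
  ∑ m ∈ range n, (-1) ^ m * p.coeff m

@[simp]
theorem alternatingCoeffSum_add (p q : R[X]) (n : ℕ) :
    alternatingCoeffSum (p + q) n = alternatingCoeffSum p n + alternatingCoeffSum q n := by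
  simp only [alternatingCoeffSum, coeff_add, mul_add, sum_add_distrib]

@[simp]
theorem alternatingCoeffSum_sub (p q : R[X]) (n : ℕ) :
    alternatingCoeffSum (p - q) n = alternatingCoeffSum p n - alternatingCoeffSum q n := by
  simp only [alternatingCoeffSum, coeff_sub, mul_sub, sum_sub_distrib]

theorem alternatingCoeffSum_one {n : ℕ} (hn : 0 < n) : alternatingCoeffSum (1 : R[X]) n = 1 := by
  simp [alternatingCoeffSum, coeff_one, hn]

theorem alternatingCoeffSum_X_mul (p : R[X]) (n : ℕ) :
    alternatingCoeffSum (X * p) (n + 1) = -alternatingCoeffSum p n := by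
  simp [alternatingCoeffSum, sum_range_succ', coeff_X_mul, pow_succ]

theorem alternatingCoeffSum_one_add_X_mul (p : R[X]) (n : ℕ) :
    alternatingCoeffSum ((1 + X) * p) (n + 1) = (-1) ^ n * p.coeff n := by
  rw [add_mul, one_mul, alternatingCoeffSum_add, alternatingCoeffSum_X_mul, alternatingCoeffSum,
    sum_range_succ, ← alternatingCoeffSum, add_neg_cancel_comm]

theorem alternatingCoeffSum_one_sub_X_mul (p : R[X]) (n : ℕ) :
    alternatingCoeffSum ((1 - X) * p) (n + 1) =
      alternatingCoeffSum p (n + 1) + alternatingCoeffSum p n := by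
  rw [sub_mul, one_mul, alternatingCoeffSum_sub, alternatingCoeffSum_X_mul, sub_neg_eq_add]

theorem alternatingCoeffSum_add_of_reflect_eq {p : R[X]} {n : ℕ} (hdeg : p.natDegree ≤ 2 * n)
    (hp : reflect (2 * n) p = p) :
    alternatingCoeffSum p (n + 1) + alternatingCoeffSum p n = p.eval (-1) := by
  have hsymm : ∀ m ≤ 2 * n, p.coeff (2 * n - m) = p.coeff m := fun m hm => by
    conv_lhs => rw [← hp, coeff_reflect, revAt_le (by omega), Nat.sub_sub_self hm]
  have heval : p.eval (-1) = ∑ m ∈ range ((n + 1) + n), (-1) ^ m * p.coeff m := by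
    rw [eval_eq_sum_range' (n := n + 1 + n) (by omega)]
    exact sum_congr rfl fun m _ => mul_comm _ _
  rw [heval, sum_range_add, alternatingCoeffSum, alternatingCoeffSum,
    ← sum_range_reflect (fun k => (-1 : R) ^ (n + 1 + k) * p.coeff (n + 1 + k)) n]
  congr 1
  refine sum_congr rfl fun k hk => ?_
  have hk : k < n := mem_range.mp hk
  rw [show n + 1 + (n - 1 - k) = 2 * n - k by omega, hsymm k (by omega),
    show 2 * n - k = k + 2 * (n - k) by omega, pow_add, pow_mul, neg_one_sq, one_pow, mul_one]

end AlternatingCoeffSum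

section Trinomial

variable {R : Type*} [CommRing R]

theorem natDegree_one_add_X_add_X_sq_pow_le (n : ℕ) :
    ((1 + X + X ^ 2 : R[X]) ^ n).natDegree ≤ 2 * n := by
  rw [mul_comm]
  exact natDegree_pow_le_of_le n (by compute_degree)

theorem reflect_one_add_X_add_X_sq_pow (n : ℕ) :
    reflect (2 * n) ((1 + X + X ^ 2 : R[X]) ^ n) = (1 + X + X ^ 2) ^ n := by
  induction n with
  | zero => simp
  | succ n ih =>
    have hX : reflect 2 (X : R[X]) = X := by simpa [revAt_le] using reflect_monomial (R := R) 2 1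
    rw [mul_add_one, pow_succ, reflect_mul _ _ (natDegree_one_add_X_add_X_sq_pow_le n)
      (by compute_degree), ih]
    simp only [reflect_add, reflect_one, hX, reflect_monomial, le_refl, revAt_le, tsub_self,
      pow_zero]
    ring

end Trinomial

@[simp]
theorem chooseZ_natCast (p k : ℕ) : chooseZ p k = p.choose k := by
  simp [chooseZ]

theorem coeff_one_sub_X_mul_one_add_X_pow (p k : ℕ) :
    ((1 - X) * (1 + X) ^ p : ℤ[X]).coeff k = chooseZ p k - chooseZ p (k - 1) := by
  rw [sub_mul, one_mul, coeff_sub, coeff_one_add_X_pow]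
  cases k with
  | zero => simp [chooseZ]
  | succ k =>
    rw [coeff_X_mul, coeff_one_add_X_pow, chooseZ_natCast, Nat.cast_succ, add_sub_cancel_right,
      chooseZ_natCast]

noncomputable def binomialSumPoly (n : ℕ) : ℤ[X] :=
  ∑ i ∈ range n, (n.choose (i + 1) : ℤ[X]) * X ^ (i + 1) * ((1 - X) * (1 + X) ^ i)

theorem coeff_binomialSumPoly (n : ℕ) :
    (binomialSumPoly n).coeff n = ∑ j ∈ Icc 1 n,
      (n.choose j : ℤ) * (chooseZ (j - 1) ((n : ℤ) - j) - chooseZ (j - 1) ((n : ℤ) - j - 1)) := by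
  rw [← Ico_add_one_right_eq_Icc, sum_Ico_eq_sum_range, binomialSumPoly, finsetSum_coeff]
  refine sum_congr rfl fun i hi => ?_
  have hi : i < n := mem_range.mp hi
  rw [mul_assoc, coeff_natCast_mul, coeff_X_pow_mul', if_pos (by omega),
    coeff_one_sub_X_mul_one_add_X_pow]
  simp [Nat.cast_sub (show i + 1 ≤ n by omega), add_comm 1 i]

theorem one_add_X_mul_binomialSumPoly (n : ℕ) :
    (1 + X) * binomialSumPoly n = (1 - X) * ((1 + X + X ^ 2) ^ n - 1) := by
  have hbinom : (1 + X + X ^ 2 : ℤ[X]) ^ n =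
      1 + ∑ i ∈ range n, (n.choose (i + 1) : ℤ[X]) * (X * (1 + X)) ^ (i + 1) := by
    rw [show (1 + X + X ^ 2 : ℤ[X]) = X * (1 + X) + 1 by ring, add_pow, sum_range_succ']
    simp [add_comm, mul_comm]
  rw [hbinom, add_sub_cancel_left, binomialSumPoly, mul_sum, mul_sum]
  refine sum_congr rfl fun i _ => ?_
  rw [mul_pow]
  ring

/-- For every `n ≥ 1`,
`∑_{j=1}^{n} C(n,j) (C(j−1, n−j) − C(j−1, n−j−1)) = (−1)^{n+1}`,
with the convention `C(p,q) = 0` when `q < 0` or `q > p`. -/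
theorem binomial_telescoping_identity (n : ℕ) (hn : 1 ≤ n) :
    ∑ j ∈ Finset.Icc 1 n,
      (n.choose j : ℤ) *
        (chooseZ (j - 1) ((n : ℤ) - j) - chooseZ (j - 1) ((n : ℤ) - j - 1))
      = (-1) ^ (n + 1) := by
  rw [← coeff_binomialSumPoly]
  have hQ : (-1) ^ n * (binomialSumPoly n).coeff n = -1 := by
    rw [← alternatingCoeffSum_one_add_X_mul, one_add_X_mul_binomialSumPoly,
      alternatingCoeffSum_one_sub_X_mul, alternatingCoeffSum_sub, alternatingCoeffSum_sub,
      alternatingCoeffSum_one n.succ_pos, alternatingCoeffSum_one hn]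
    have hpal := alternatingCoeffSum_add_of_reflect_eq (natDegree_one_add_X_add_X_sq_pow_le n)
      (reflect_one_add_X_add_X_sq_pow (R := ℤ) n)
    have heval : ((1 + X + X ^ 2 : ℤ[X]) ^ n).eval (-1) = 1 := by norm_num
    linear_combination hpal.trans heval
  have hsq : ((-1 : ℤ) ^ n) ^ 2 = 1 := by rw [← pow_mul, mul_comm, pow_mul, neg_one_sq, one_pow]
  linear_combination (-1) ^ n * hQ - (binomialSumPoly n).coeff n * hsq
end
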